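/- Let L be a free ℤ-module with a positive definite inner product, and let α be a nonzero element of L of minimal norm among nonzero elements. Let T be another free ℤ-module with a positive definite inner product, and let f, g : L ⊗ ℝ → T ⊗ ℝ be linear maps sending L into T, each admitting an adjoint f*, g* : T ⊗ ℝ → L ⊗ ℝ (mapping T into L) with f* ∘ f = r·id and g* ∘ g = r·id for an integer r ≥ 1. If f(α) ≠ g(α), then ‖f(α) - g(α)‖ ≥ ‖α‖ / √r. -/

import Mathlib

/-!
Put `β = f α - g α`. The adjoint identities give `⟪α, f' β - g' β⟫ = ‖β‖² ≠ 0`, so the lattice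
vectors `f' β` and `g' β` differ and one of them is nonzero; by minimality its norm is at least
`‖α‖`. On the other hand `f' ∘ f = r • id` makes `f` scale norms by `√r`, and then
`‖f' y‖² = ⟪f (f' y), y⟫ ≤ √r ‖f' y‖ ‖y‖` bounds `‖f' y‖` by `√r ‖y‖`, likewise for `g'`.
-/

open scoped InnerProductSpace

section

variable {V W : Type*} [NormedAddCommGroup V] [InnerProductSpace ℝ V]
  [NormedAddCommGroup W] [InnerProductSpace ℝ W]

theorem norm_apply_eq_sqrt_mul_norm {f : V →ₗ[ℝ] W} {f' : W →ₗ[ℝ] V}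
    (hadj : ∀ x y, ⟪f x, y⟫_ℝ = ⟪x, f' y⟫_ℝ) {c : ℝ} (hff : ∀ x, f' (f x) = c • x) (x : V) :
    ‖f x‖ = √c * ‖x‖ := by
  have hsq : ‖f x‖ ^ 2 = c * ‖x‖ ^ 2 := by
    rw [← real_inner_self_eq_norm_sq, hadj, hff, real_inner_smul_right,
      real_inner_self_eq_norm_sq]
  rw [← Real.sqrt_sq (norm_nonneg (f x)), hsq, Real.sqrt_mul' _ (sq_nonneg _),
    Real.sqrt_sq (norm_nonneg x)]

theorem norm_adjoint_apply_le {f : V →ₗ[ℝ] W} {f' : W →ₗ[ℝ] V}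
    (hadj : ∀ x y, ⟪f x, y⟫_ℝ = ⟪x, f' y⟫_ℝ) {c : ℝ} (hff : ∀ x, f' (f x) = c • x) (y : W) :
    ‖f' y‖ ≤ √c * ‖y‖ := by
  have h : ‖f' y‖ * ‖f' y‖ ≤ ‖f' y‖ * (√c * ‖y‖) :=
    calc ‖f' y‖ * ‖f' y‖ = ⟪f (f' y), y⟫_ℝ := by rw [hadj, real_inner_self_eq_norm_mul_norm]
      _ ≤ ‖f (f' y)‖ * ‖y‖ := real_inner_le_norm _ _
      _ = ‖f' y‖ * (√c * ‖y‖) := by rw [norm_apply_eq_sqrt_mul_norm hadj hff]; ring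
  rcases (norm_nonneg (f' y)).eq_or_lt with h0 | hpos
  · rw [← h0]; positivity
  · exact le_of_mul_le_mul_left h hpos

theorem inner_adjoint_sub_adjoint_apply_sub {f g : V →ₗ[ℝ] W} {f' g' : W →ₗ[ℝ] V}
    (hadjf : ∀ x y, ⟪f x, y⟫_ℝ = ⟪x, f' y⟫_ℝ) (hadjg : ∀ x y, ⟪g x, y⟫_ℝ = ⟪x, g' y⟫_ℝ)
    (x : V) : ⟪x, f' (f x - g x) - g' (f x - g x)⟫_ℝ = ‖f x - g x‖ ^ 2 := by
  rw [inner_sub_right, ← hadjf, ← hadjg, ← inner_sub_left, real_inner_self_eq_norm_sq]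

theorem adjoint_apply_sub_ne_of_ne {f g : V →ₗ[ℝ] W} {f' g' : W →ₗ[ℝ] V}
    (hadjf : ∀ x y, ⟪f x, y⟫_ℝ = ⟪x, f' y⟫_ℝ) (hadjg : ∀ x y, ⟪g x, y⟫_ℝ = ⟪x, g' y⟫_ℝ)
    {x : V} (hne : f x ≠ g x) : f' (f x - g x) ≠ g' (f x - g x) := by
  intro h
  have hinner := inner_adjoint_sub_adjoint_apply_sub hadjf hadjg x
  rw [h, sub_self, inner_zero_right, eq_comm, sq_eq_zero_iff, norm_eq_zero, sub_eq_zero] at hinner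
  exact hne hinner

end

theorem norm_le_max_of_ne {V : Type*} [NormedAddCommGroup V] {L : AddSubgroup V} {α a b : V}
    (hmin : ∀ x ∈ L, x ≠ 0 → ‖α‖ ≤ ‖x‖) (ha : a ∈ L) (hb : b ∈ L) (hab : a ≠ b) :
    ‖α‖ ≤ max ‖a‖ ‖b‖ := by
  by_cases ha0 : a = 0
  · exact (hmin b hb (ha0 ▸ hab).symm).trans (le_max_right _ _)
  · exact (hmin a ha ha0).trans (le_max_left _ _)

theorem distance_estimate_general {V W : Type*} [NormedAddCommGroup V] [InnerProductSpace ℝ V]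
    [NormedAddCommGroup W] [InnerProductSpace ℝ W]
    (L : Submodule ℤ V) (T : Submodule ℤ W)
    (f g : V →ₗ[ℝ] W) (f' g' : W →ₗ[ℝ] V)
    (hfL : ∀ x ∈ L, f x ∈ T) (hgL : ∀ x ∈ L, g x ∈ T)
    (hf'T : ∀ y ∈ T, f' y ∈ L) (hg'T : ∀ y ∈ T, g' y ∈ L)
    (hadjf : ∀ (x : V) (y : W), ⟪f x, y⟫_ℝ = ⟪x, f' y⟫_ℝ)
    (hadjg : ∀ (x : V) (y : W), ⟪g x, y⟫_ℝ = ⟪x, g' y⟫_ℝ)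
    (r : ℤ)
    (hff : ∀ x : V, f' (f x) = (r : ℝ) • x)
    (hgg : ∀ x : V, g' (g x) = (r : ℝ) • x)
    (α : V) (hαL : α ∈ L)
    (hmin : ∀ x ∈ L, x ≠ 0 → ‖α‖ ≤ ‖x‖)
    (hne : f α ≠ g α) :
    ‖α‖ / Real.sqrt (r : ℝ) ≤ ‖f α - g α‖ := by
  set β := f α - g α
  have hβT : β ∈ T := T.sub_mem (hfL α hαL) (hgL α hαL)
  have hα : ‖α‖ ≤ √r * ‖β‖ :=
    calc ‖α‖ ≤ max ‖f' β‖ ‖g' β‖ :=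
          norm_le_max_of_ne (L := L.toAddSubgroup) hmin (hf'T β hβT) (hg'T β hβT)
            (adjoint_apply_sub_ne_of_ne hadjf hadjg hne)
      _ ≤ √r * ‖β‖ :=
          max_le (norm_adjoint_apply_le hadjf hff β) (norm_adjoint_apply_le hadjg hgg β)
  exact div_le_of_le_mul₀ (Real.sqrt_nonneg _) (norm_nonneg _) (by rwa [mul_comm])

/-- Distance estimate (Proposition 3.2, abstract form): if `α` is a nonzero lattice
element of minimal norm in `L`, and `f, g` are lattice-preserving maps of degree `r`
(i.e. with adjoints `f', g'` mapping `T` into `L` and `f' ∘ f = r·id = g' ∘ g`) with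
`f(α) ≠ g(α)`, then `‖f(α) - g(α)‖ ≥ ‖α‖/√r`. -/
theorem distance_estimate {V W : Type*} [NormedAddCommGroup V] [InnerProductSpace ℝ V]
    [NormedAddCommGroup W] [InnerProductSpace ℝ W]
    [FiniteDimensional ℝ V] [FiniteDimensional ℝ W]
    (L : Submodule ℤ V) (T : Submodule ℤ W)
    (f g : V →ₗ[ℝ] W) (f' g' : W →ₗ[ℝ] V)
    (hfL : ∀ x ∈ L, f x ∈ T) (hgL : ∀ x ∈ L, g x ∈ T)
    (hf'T : ∀ y ∈ T, f' y ∈ L) (hg'T : ∀ y ∈ T, g' y ∈ L)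
    (hadjf : ∀ (x : V) (y : W), ⟪f x, y⟫_ℝ = ⟪x, f' y⟫_ℝ)
    (hadjg : ∀ (x : V) (y : W), ⟪g x, y⟫_ℝ = ⟪x, g' y⟫_ℝ)
    (r : ℤ) (hr : 1 ≤ r)
    (hff : ∀ x : V, f' (f x) = (r : ℝ) • x)
    (hgg : ∀ x : V, g' (g x) = (r : ℝ) • x)
    (α : V) (hαL : α ∈ L) (hα0 : α ≠ 0)
    (hmin : ∀ x ∈ L, x ≠ 0 → ‖α‖ ≤ ‖x‖)
    (hne : f α ≠ g α) :
    ‖α‖ / Real.sqrt (r : ℝ) ≤ ‖f α - g α‖ :=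
  distance_estimate_general L T f g f' g' hfL hgL hf'T hg'T hadjf hadjg r hff hgg α hαL hmin hne
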